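/- Let S = (P, L, I) be a finite generalized hexagon or generalized octagon, and let G be a group of automorphisms of S acting transitively on the point set P. Then the centralizer of G in Aut(S) does not act transitively on P. -/

import Mathlib

open Equiv

/-- The incidence graph of a point-line geometry. -/
def incGraph {P L : Type*} (I : P → L → Prop) : SimpleGraph (P ⊕ L) where
  Adj x y := (∃ p l, x = Sum.inl p ∧ y = Sum.inr l ∧ I p l) ∨
             (∃ p l, x = Sum.inr l ∧ y = Sum.inl p ∧ I p l)
  symm := by
    constructor
    rintro x y (⟨p, l, rfl, rfl, h⟩ | ⟨p, l, rfl, rfl, h⟩)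
    · exact Or.inr ⟨p, l, rfl, rfl, h⟩
    · exact Or.inl ⟨p, l, rfl, rfl, h⟩
  loopless := by
    constructor
    rintro x (⟨p, l, rfl, h2, -⟩ | ⟨p, l, rfl, h2, -⟩) <;> exact absurd h2 (by simp)

/-- `S = (P, L, I)` is a generalized `n`-gon: thickness plus the incidence graph has
diameter `n` and girth `2n`. -/
def IsGenPolygon {P L : Type*} (n : ℕ) (I : P → L → Prop) : Prop :=
  (∀ p : P, 3 ≤ Nat.card {l : L // I p l}) ∧
  (∀ l : L, 3 ≤ Nat.card {p : P // I p l}) ∧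
  (incGraph I).ediam = (n : ℕ∞) ∧
  (incGraph I).egirth = (2 * n : ℕ∞)

/-- The group of automorphisms of the geometry `(P, L, I)`, as a subgroup of
`Perm P × Perm L`. -/
def autGroup {P L : Type*} (I : P → L → Prop) : Subgroup (Perm P × Perm L) where
  carrier := {g | ∀ p l, I p l ↔ I (g.1 p) (g.2 l)}
  one_mem' := by intro p l; simp
  mul_mem' := by
    intro a b ha hb p l
    simpa [Perm.mul_apply] using (hb p l).trans (ha (b.1 p) (b.2 l))
  inv_mem' := by
    intro a ha p l
    simpa using (ha (a⁻¹.1 p) (a⁻¹.2 l)).symm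

/-- A subgroup `G` of `Perm P × Perm L` is flag-transitive on the geometry `(P, L, I)`. -/
def FlagTransitive {P L : Type*} (I : P → L → Prop)
    (G : Subgroup (Perm P × Perm L)) : Prop :=
  ∀ p l p' l', I p l → I p' l' → ∃ g ∈ G, g.1 p = p' ∧ g.2 l = l'

/-- The induced action of `G` on the point set is primitive: it is transitive and
preserves no nontrivial partition (every block is trivial). -/
def PrimitiveOnPoints {P L : Type*} (G : Subgroup (Perm P × Perm L)) : Prop :=
  (∀ x y : P, ∃ g ∈ G, g.1 x = y) ∧
  ∀ B : Set P, (∀ g ∈ G, (g.1 : P → P) '' B = B ∨ Disjoint ((g.1 : P → P) '' B) B) →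
    B.Subsingleton ∨ B = Set.univ

/-- The induced action of `G` on the line set is primitive. -/
def PrimitiveOnLines {P L : Type*} (G : Subgroup (Perm P × Perm L)) : Prop :=
  (∀ x y : L, ∃ g ∈ G, g.2 x = y) ∧
  ∀ B : Set L, (∀ g ∈ G, (g.2 : L → L) '' B = B ∨ Disjoint ((g.2 : L → L) '' B) B) →
    B.Subsingleton ∨ B = Set.univ

/-- A group is almost simple if it has a normal subgroup `T` which is non-abelian simple
and is contained in every nontrivial normal subgroup (so `T` is the unique minimal normal
subgroup, the socle). -/
def IsAlmostSimple (G : Type*) [Group G] : Prop :=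
  ∃ T : Subgroup G, T.Normal ∧ IsSimpleGroup T ∧ (∃ a b : T, a * b ≠ b * a) ∧
    ∀ N : Subgroup G, N.Normal → N ≠ ⊥ → T ≤ N

/-!
Let `C` be the centralizer of `G` in `Aut S` and suppose that `C` is transitive on points.
Fix a point `x₀`, let `c, d ∈ C` move `x₀` along distinct lines `M`, `N` through `x₀`, and
pick `g ∈ G` with `g x₀ = d x₀`. As `c` and `g` commute, `x₀, c x₀, c d x₀ = g c x₀, d x₀` is a
closed quadrangle with sides `M, c N, g M, N`. The incidence graph of a generalized `n`-gon with
`n ≥ 5` has girth greater than `8`, so there are no triangles or quadrangles and this one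
degenerates, which forces `c⁻¹ M = N` or `d⁻¹ N = M`. From three lines through `x₀` one
obtains `d, e ∈ C` moving `x₀` along distinct lines `N`, `N'` with `d⁻¹ N = K = e⁻¹ N'` for a
third line `K` (taking `e = c⁻¹` when `c⁻¹ M ≠ M`), and for this pair the dichotomy fails.
-/

section IncidenceGraph

variable {P L : Type*} {I : P → L → Prop}

lemma incGraph_adj_inl_inr {p : P} {l : L} (h : I p l) :
    (incGraph I).Adj (Sum.inl p) (Sum.inr l) := Or.inl ⟨p, l, rfl, rfl, h⟩

lemma incGraph_adj_inr_inl {p : P} {l : L} (h : I p l) :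
    (incGraph I).Adj (Sum.inr l) (Sum.inl p) := Or.inr ⟨p, l, rfl, rfl, h⟩

lemma egirth_incGraph_le_four {p q : P} {l m : L} (hpq : p ≠ q) (hlm : l ≠ m)
    (hpl : I p l) (hql : I q l) (hqm : I q m) (hpm : I p m) :
    (incGraph I).egirth ≤ 4 := by
  let w : (incGraph I).Walk (Sum.inl p) (Sum.inl p) :=
    .cons (incGraph_adj_inl_inr hpl) <| .cons (incGraph_adj_inr_inl hql) <|
    .cons (incGraph_adj_inl_inr hqm) <| .cons (incGraph_adj_inr_inl hpm) .nil
  have hw : w.IsCycle := by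
    simp [w, SimpleGraph.Walk.cons_isCycle_iff, hpq, hlm, hpq.symm]
  exact SimpleGraph.egirth_le_length hw

lemma egirth_incGraph_le_six {p q r : P} {l m n : L}
    (hpq : p ≠ q) (hqr : q ≠ r) (hrp : r ≠ p) (hlm : l ≠ m) (hmn : m ≠ n) (hnl : n ≠ l)
    (hpl : I p l) (hql : I q l) (hqm : I q m) (hrm : I r m) (hrn : I r n) (hpn : I p n) :
    (incGraph I).egirth ≤ 6 := by
  let w : (incGraph I).Walk (Sum.inl p) (Sum.inl p) :=
    .cons (incGraph_adj_inl_inr hpl) <| .cons (incGraph_adj_inr_inl hql) <|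
    .cons (incGraph_adj_inl_inr hqm) <| .cons (incGraph_adj_inr_inl hrm) <|
    .cons (incGraph_adj_inl_inr hrn) <| .cons (incGraph_adj_inr_inl hpn) .nil
  have hw : w.IsCycle := by
    simp [w, SimpleGraph.Walk.cons_isCycle_iff, hpq, hqr, hrp, hlm, hmn,
      hpq.symm, hrp.symm, hnl.symm]
  exact SimpleGraph.egirth_le_length hw

lemma egirth_incGraph_le_eight {p₁ p₂ p₃ p₄ : P} {l₁ l₂ l₃ l₄ : L}
    (hp₁₂ : p₁ ≠ p₂) (hp₁₃ : p₁ ≠ p₃) (hp₁₄ : p₁ ≠ p₄) (hp₂₃ : p₂ ≠ p₃) (hp₂₄ : p₂ ≠ p₄)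
    (hp₃₄ : p₃ ≠ p₄) (hl₁₂ : l₁ ≠ l₂) (hl₁₃ : l₁ ≠ l₃) (hl₁₄ : l₁ ≠ l₄) (hl₂₃ : l₂ ≠ l₃)
    (hl₂₄ : l₂ ≠ l₄) (hl₃₄ : l₃ ≠ l₄)
    (h₁ : I p₁ l₁) (h₂ : I p₂ l₁) (h₃ : I p₂ l₂) (h₄ : I p₃ l₂)
    (h₅ : I p₃ l₃) (h₆ : I p₄ l₃) (h₇ : I p₄ l₄) (h₈ : I p₁ l₄) :
    (incGraph I).egirth ≤ 8 := by
  let w : (incGraph I).Walk (Sum.inl p₁) (Sum.inl p₁) :=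
    .cons (incGraph_adj_inl_inr h₁) <| .cons (incGraph_adj_inr_inl h₂) <|
    .cons (incGraph_adj_inl_inr h₃) <| .cons (incGraph_adj_inr_inl h₄) <|
    .cons (incGraph_adj_inl_inr h₅) <| .cons (incGraph_adj_inr_inl h₆) <|
    .cons (incGraph_adj_inl_inr h₇) <| .cons (incGraph_adj_inr_inl h₈) .nil
  have hw : w.IsCycle := by
    simp [w, SimpleGraph.Walk.cons_isCycle_iff, hp₁₂, hp₁₃, hp₁₄, hp₂₃, hp₂₄, hp₃₄,
      hl₁₂, hl₁₃, hl₁₄, hl₂₃, hl₂₄, hl₃₄, hp₁₂.symm, hp₁₃.symm, hp₁₄.symm]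
  exact SimpleGraph.egirth_le_length hw

lemma eq_of_incident_of_incident (hg : 4 < (incGraph I).egirth) {p q : P} {l m : L}
    (hpq : p ≠ q) (hpl : I p l) (hql : I q l) (hpm : I p m) (hqm : I q m) : l = m := by
  by_contra hlm
  exact (egirth_incGraph_le_four hpq hlm hpl hql hqm hpm).not_gt hg

lemma incident_of_triangle (hg : 6 < (incGraph I).egirth) {p q r : P} {l m n : L}
    (hpq : p ≠ q) (hpl : I p l) (hql : I q l) (hqm : I q m) (hrm : I r m) (hrn : I r n)
    (hpn : I p n) : I r l := by
  by_cases hqr : q = r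
  · exact hqr ▸ hql
  by_cases hrp : r = p
  · exact hrp ▸ hpl
  by_cases hlm : l = m
  · exact hlm ▸ hrm
  by_cases hnl : n = l
  · exact hnl ▸ hrn
  by_cases hmn : m = n
  · subst hmn
    exact absurd (eq_of_incident_of_incident (lt_trans (by norm_num) hg) hpq hpl hql hpn hqm) hlm
  exact absurd hg (egirth_incGraph_le_six hpq hqr hrp hlm hmn hnl hpl hql hqm hrm hrn hpn).not_gt

lemma quadrangle_degenerate (hg : 8 < (incGraph I).egirth) {p₁ p₂ p₃ p₄ : P}
    {l₁ l₂ l₃ l₄ : L} (h₁ : I p₁ l₁) (h₂ : I p₂ l₁) (h₃ : I p₂ l₂) (h₄ : I p₃ l₂)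
    (h₅ : I p₃ l₃) (h₆ : I p₄ l₃) (h₇ : I p₄ l₄) (h₈ : I p₁ l₄) :
    p₁ = p₂ ∨ p₂ = p₃ ∨ p₃ = p₄ ∨ p₄ = p₁ ∨ l₁ = l₂ ∨ l₂ = l₃ ∨ l₃ = l₄ ∨ l₄ = l₁ := by
  by_contra! h
  obtain ⟨hp₁₂, hp₂₃, hp₃₄, hp₄₁, hl₁₂, hl₂₃, hl₃₄, hl₄₁⟩ := h
  have hg4 : 4 < (incGraph I).egirth := lt_trans (by norm_num) hg
  have hp₁₃ : p₁ ≠ p₃ := fun h ↦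
    hl₁₂ (eq_of_incident_of_incident hg4 hp₁₂ h₁ h₂ (h ▸ h₄) h₃)
  have hp₂₄ : p₂ ≠ p₄ := fun h ↦
    hl₂₃ (eq_of_incident_of_incident hg4 hp₂₃ h₃ h₄ (h ▸ h₆) h₅)
  have hl₁₃ : l₁ ≠ l₃ := fun h ↦
    hl₁₂ (eq_of_incident_of_incident hg4 hp₂₃ h₂ (h ▸ h₅) h₃ h₄)
  have hl₂₄ : l₂ ≠ l₄ := fun h ↦
    hl₂₃ (eq_of_incident_of_incident hg4 hp₃₄ h₄ (h ▸ h₇) h₅ h₆)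
  exact hg.not_ge <| egirth_incGraph_le_eight hp₁₂ hp₁₃ hp₄₁.symm hp₂₃ hp₂₄ hp₃₄ hl₁₂ hl₁₃
    hl₄₁.symm hl₂₃ hl₂₄ hl₃₄ h₁ h₂ h₃ h₄ h₅ h₆ h₇ h₈

end IncidenceGraph

def autCentralizer {P L : Type*} (I : P → L → Prop) (G : Subgroup (Perm P × Perm L)) :
    Subgroup (Perm P × Perm L) :=
  Subgroup.centralizer (G : Set (Perm P × Perm L)) ⊓ autGroup I

section Centralizer

variable {P L : Type*} {I : P → L → Prop} {G : Subgroup (Perm P × Perm L)}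

lemma fst_apply_comm_of_mem_centralizer {c g : Perm P × Perm L}
    (hc : c ∈ Subgroup.centralizer (G : Set (Perm P × Perm L))) (hg : g ∈ G) (x : P) :
    c.1 (g.1 x) = g.1 (c.1 x) :=
  congrArg (fun k : Perm P × Perm L ↦ k.1 x) (Subgroup.mem_centralizer_iff.mp hc g hg).symm

lemma inv_fst_apply_ne {d : Perm P × Perm L} {x : P} (hd : d.1 x ≠ x) : d⁻¹.1 x ≠ x := by
  intro h
  apply hd
  conv_lhs => rw [← h]
  simp

lemma snd_inv_eq_or_snd_inv_eq (hg : 8 < (incGraph I).egirth) (hG : G ≤ autGroup I)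
    (htrans : ∀ x y : P, ∃ g ∈ G, g.1 x = y) {x₀ : P} {c d : Perm P × Perm L}
    (hc : c ∈ autCentralizer I G) (hd : d ∈ autCentralizer I G) {M N : L} (hMN : M ≠ N)
    (hM : I x₀ M) (hN : I x₀ N) (hcM : I (c.1 x₀) M) (hdN : I (d.1 x₀) N)
    (hcx : c.1 x₀ ≠ x₀) (hdx : d.1 x₀ ≠ x₀) :
    c⁻¹.2 M = N ∨ d⁻¹.2 N = M := by
  obtain ⟨g, hgG, hgx⟩ := htrans x₀ (d.1 x₀)
  have hgA := hG hgG
  have hga : g.1 (c.1 x₀) = c.1 (d.1 x₀) := by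
    rw [← hgx, fst_apply_comm_of_mem_centralizer hc.1 hgG]
  have hcN : I (c.1 x₀) (c.2 N) := (hc.2 x₀ N).1 hN
  have hcdN : I (c.1 (d.1 x₀)) (c.2 N) := (hc.2 _ N).1 hdN
  have hcdM : I (c.1 (d.1 x₀)) (g.2 M) := hga ▸ (hgA _ M).1 hcM
  have hdM : I (d.1 x₀) (g.2 M) := hgx ▸ (hgA x₀ M).1 hM
  have hg4 : 4 < (incGraph I).egirth := lt_trans (by norm_num) hg
  rcases quadrangle_degenerate hg hM hcM hcN hcdN hcdM hdM hdN hN with h | h | h | h | h | h | h | h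
  · exact absurd h.symm hcx
  · exact absurd (c.1.injective h).symm hdx
  · exact absurd (g.1.injective (by rw [hga, h, hgx])) hcx
  · exact absurd h hdx
  · left
    rw [h]
    simp
  · have hdM : I (d.1 x₀) M :=
      incident_of_triangle (lt_trans (by norm_num) hg) hcx.symm hM hcM hcN (h ▸ hdM) hdN hN
    exact absurd (eq_of_incident_of_incident hg4 hdx.symm hM hdM hN hdN) hMN
  · right
    have hd' : d⁻¹ ∈ autCentralizer I G := inv_mem hd
    have hgd : g.1 (d⁻¹.1 x₀) = x₀ := by
      rw [← fst_apply_comm_of_mem_centralizer hd'.1 hgG, hgx]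
      simp
    refine eq_of_incident_of_incident hg4 (inv_fst_apply_ne hdx).symm ?_ ((hd'.2 _ _).1 hN) hM
      ((hgA _ M).2 (by rwa [hgd, h]))
    simpa using (hd'.2 _ _).1 hdN
  · exact absurd h.symm hMN

end Centralizer

lemma exists_three_ne_of_three_le_natCard {α : Type*} (h : 3 ≤ Nat.card α) :
    ∃ a b c : α, a ≠ b ∧ a ≠ c ∧ b ≠ c := by
  have : Finite α := Nat.finite_of_card_ne_zero (by omega)
  have := Fintype.ofFinite α
  exact Fintype.two_lt_card_iff.mp (by rwa [← Nat.card_eq_fintype_card])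

theorem exists_forall_mem_autCentralizer_fst_apply_ne {P L : Type*} {I : P → L → Prop}
    (hg : 8 < (incGraph I).egirth) (hP : ∀ p : P, 3 ≤ Nat.card {l : L // I p l})
    (hL : ∀ l : L, Nontrivial {p : P // I p l}) {G : Subgroup (Perm P × Perm L)}
    (hG : G ≤ autGroup I) (htrans : ∀ x y : P, ∃ g ∈ G, g.1 x = y) (x₀ : P) :
    ∃ y : P, ∀ c ∈ autCentralizer I G, c.1 x₀ ≠ y := by
  by_contra! hC
  have exists_on : ∀ N, I x₀ N → ∃ c ∈ autCentralizer I G, I (c.1 x₀) N ∧ c.1 x₀ ≠ x₀ := by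
    intro N hN
    obtain ⟨⟨y, hy⟩, hne⟩ := exists_ne (⟨x₀, hN⟩ : {p // I p N})
    obtain ⟨c, hc, rfl⟩ := hC y
    exact ⟨c, hc, hy, fun h ↦ hne (Subtype.ext h)⟩
  have key := @snd_inv_eq_or_snd_inv_eq _ _ _ _ hg hG htrans x₀
  obtain ⟨⟨L₁, h₁⟩, ⟨L₂, h₂⟩, ⟨L₃, h₃⟩, h₁₂, h₁₃, h₂₃⟩ :=
    exists_three_ne_of_three_le_natCard (hP x₀)
  simp only [ne_eq, Subtype.mk.injEq] at h₁₂ h₁₃ h₂₃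
  obtain ⟨c, hc, hcL, hcx⟩ := exists_on L₁ h₁
  by_cases hA : c⁻¹.2 L₁ = L₁
  · obtain ⟨d, hd, hdL, hdx⟩ := exists_on L₂ h₂
    obtain ⟨e, he, heL, hex⟩ := exists_on L₃ h₃
    have hd₁ : d⁻¹.2 L₂ = L₁ := (key hc hd h₁₂ h₁ h₂ hcL hdL hcx hdx).resolve_left (by rwa [hA])
    have he₁ : e⁻¹.2 L₃ = L₁ := (key hc he h₁₃ h₁ h₃ hcL heL hcx hex).resolve_left (by rwa [hA])
    rcases key hd he h₂₃ h₂ h₃ hdL heL hdx hex with h | h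
    · exact h₁₃ (hd₁ ▸ h)
    · exact h₁₂ (he₁ ▸ h)
  · obtain ⟨N, hN, hNL, hNA⟩ : ∃ N, I x₀ N ∧ N ≠ L₁ ∧ N ≠ c⁻¹.2 L₁ := by
      by_cases h : c⁻¹.2 L₁ = L₂
      · exact ⟨L₃, h₃, Ne.symm h₁₃, h ▸ Ne.symm h₂₃⟩
      · exact ⟨L₂, h₂, Ne.symm h₁₂, Ne.symm h⟩
    obtain ⟨d, hd, hdN, hdx⟩ := exists_on N hN
    have hd₁ : d⁻¹.2 N = L₁ :=
      (key hc hd (Ne.symm hNL) h₁ hN hcL hdN hcx hdx).resolve_left (Ne.symm hNA)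
    have hAx : I x₀ (c⁻¹.2 L₁) := by simpa using ((inv_mem hc).2 _ _).1 hcL
    have hcA : I (c⁻¹.1 x₀) (c⁻¹.2 L₁) := ((inv_mem hc).2 _ _).1 h₁
    rcases key hd (inv_mem hc) hNA hN hAx hdN hcA hdx (inv_fst_apply_ne hcx) with h | h
    · exact hA (hd₁ ▸ h).symm
    · exact hNL (by simpa using h.symm)

lemma incGraph_eq_bot {P L : Type*} [IsEmpty P] (I : P → L → Prop) : incGraph I = ⊥ := by
  ext x y
  simp only [incGraph, SimpleGraph.bot_adj, iff_false]
  rintro (⟨p, -⟩ | ⟨p, -⟩) <;> exact isEmptyElim p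

theorem IsGenPolygon.autCentralizer_not_transitive {P L : Type*} {I : P → L → Prop} {n : ℕ}
    (hn : 5 ≤ n) (hS : IsGenPolygon n I) {G : Subgroup (Perm P × Perm L)}
    (hG : G ≤ autGroup I) (htrans : ∀ x y : P, ∃ g ∈ G, g.1 x = y) :
    ¬ ∀ x y : P, ∃ c ∈ autCentralizer I G, c.1 x = y := by
  obtain ⟨hP, hL, -, hgirth⟩ := hS
  have hg : 8 < (incGraph I).egirth := by
    rw [hgirth]
    exact_mod_cast (by omega : 8 < 2 * n)
  obtain ⟨x₀⟩ : Nonempty P := by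
    by_contra hP
    rw [not_nonempty_iff] at hP
    rw [incGraph_eq_bot, SimpleGraph.egirth_bot] at hgirth
    exact ENat.natCast_ne_top (2 * n) (by exact_mod_cast hgirth.symm)
  have hL' (l : L) : Nontrivial {p : P // I p l} :=
    let ⟨a, b, _, hab, _⟩ := exists_three_ne_of_three_le_natCard (hL l)
    ⟨⟨a, b, hab⟩⟩
  intro hC
  obtain ⟨y, hy⟩ := exists_forall_mem_autCentralizer_fst_apply_ne hg hP hL' hG htrans x₀
  obtain ⟨c, hc, hcy⟩ := hC x₀ y
  exact hy c hc hcy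

theorem centralizer_of_point_transitive_not_transitive_general
    {P L : Type*} (I : P → L → Prop)
    (hS : IsGenPolygon 6 I ∨ IsGenPolygon 8 I)
    (G : Subgroup (Equiv.Perm P × Equiv.Perm L)) (hG : G ≤ autGroup I)
    (htrans : ∀ x y : P, ∃ g ∈ G, g.1 x = y) :
    ¬ ∀ x y : P, ∃ c ∈ Subgroup.centralizer (G : Set (Equiv.Perm P × Equiv.Perm L)) ⊓
        autGroup I, c.1 x = y := by
  rcases hS with hS | hS
  · exact hS.autCentralizer_not_transitive (by norm_num) hG htrans
  · exact hS.autCentralizer_not_transitive (by norm_num) hG htrans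

/-- If a group `G` of automorphisms of a finite generalized hexagon or
octagon is transitive on the points, then the centralizer of `G` in the full
automorphism group is not transitive on the points. -/
theorem centralizer_of_point_transitive_not_transitive
    {P L : Type*} [Fintype P] [Fintype L] (I : P → L → Prop)
    (hS : IsGenPolygon 6 I ∨ IsGenPolygon 8 I)
    (G : Subgroup (Equiv.Perm P × Equiv.Perm L)) (hG : G ≤ autGroup I)
    (htrans : ∀ x y : P, ∃ g ∈ G, g.1 x = y) :
    ¬ ∀ x y : P, ∃ c ∈ Subgroup.centralizer (G : Set (Equiv.Perm P × Equiv.Perm L)) ⊓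
        autGroup I, c.1 x = y :=
  centralizer_of_point_transitive_not_transitive_general I hS G hG htrans
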